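/- arXiv:2211.16226 — 2 statements merged into one kernel-verified Lean document; each statement's English description precedes it below -/
import Mathlib

section
/- Let A be an integral domain of characteristic p > 0 that is p-closed, i.e., for every element a of the fraction field of A with a^p ∈ A, one has a ∈ A. If the perfect closure of A (the ring of all elements x in an algebraic closure of Frac(A) such that x^{p^n} ∈ A for some n ≥ 0) is integrally closed in its fraction field, then A is integrally closed in Frac(A). -/
/-!
Embed `a` into the algebraic closure `L`. There it is a quotient of elements of `A` and a root
of a monic polynomial over `A`, both of which lie in the perfect closure, so normality of the
perfect closure puts `a` in it: `a ^ p ^ n ∈ A` for some `n`. Since `L` contains the fraction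
field, this already holds in the fraction field, and `n` applications of `p`-closedness give
`a ∈ A`.
-/

open Polynomial

theorem mem_of_pow_pow_mem {M : Type*} [Monoid M] {S : Set M} {p : ℕ}
    (hS : ∀ a, a ^ p ∈ S → a ∈ S) {a : M} : ∀ n, a ^ p ^ n ∈ S → a ∈ S
  | 0, h => by simpa using h
  | n + 1, h => mem_of_pow_pow_mem hS n (hS _ (by rwa [← pow_mul, ← pow_succ]))

theorem mem_range_of_algebraMap_mem_range {A K L : Type*} [CommRing A] [CommRing K] [Ring L]
    [Algebra A K] [Algebra K L] [Algebra A L] [IsScalarTower A K L]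
    (hinj : Function.Injective (algebraMap K L)) {a : K}
    (h : algebraMap K L a ∈ (algebraMap A L).range) : a ∈ (algebraMap A K).range := by
  obtain ⟨c, hc⟩ := h
  exact ⟨c, hinj (by rw [← IsScalarTower.algebraMap_apply, hc])⟩

theorem IsFractionRing.exists_algebraMap_mul_eq {A K L : Type*} [CommRing A] [Nontrivial A]
    [CommRing K] [CommRing L] [Algebra A K] [IsFractionRing A K] [Algebra K L] [Algebra A L]
    [IsScalarTower A K L] (hinj : Function.Injective (algebraMap K L)) (a : K) :
    ∃ r s : A, algebraMap A L s ≠ 0 ∧ algebraMap K L a * algebraMap A L s = algebraMap A L r := by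
  obtain ⟨⟨r, s⟩, hs⟩ := IsLocalization.surj (nonZeroDivisors A) a
  refine ⟨r, s, ?_, ?_⟩
  · rw [IsScalarTower.algebraMap_apply A K L, map_ne_zero_iff _ hinj]
    exact IsFractionRing.to_map_ne_zero_of_mem_nonZeroDivisors s.2
  · simpa [IsScalarTower.algebraMap_apply A K L] using congrArg (algebraMap K L) hs

theorem IsIntegral.exists_monic_coeff_mem_range {R L : Type*} [CommRing R] [Ring L]
    [Algebra R L] {y : L} (hy : IsIntegral R y) :
    ∃ g : L[X], g.Monic ∧ (∀ n, g.coeff n ∈ (algebraMap R L).range) ∧ g.eval y = 0 := by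
  obtain ⟨f, hf, he⟩ := hy
  exact ⟨f.map _, hf.map _, fun n => by rw [coeff_map]; exact ⟨_, rfl⟩, by rwa [eval_map]⟩

theorem stmt_0_general (p : ℕ) (A : Type*) [CommRing A] [IsDomain A]
    (pclosed : ∀ a : FractionRing A,
      a ^ p ∈ (algebraMap A (FractionRing A)).range → a ∈ (algebraMap A (FractionRing A)).range)
    (Aperf : Subring (AlgebraicClosure (FractionRing A)))
    (hAperf : ∀ x : AlgebraicClosure (FractionRing A), x ∈ Aperf ↔ ∃ n : ℕ,
      x ^ p ^ n ∈ (algebraMap A (AlgebraicClosure (FractionRing A))).range)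
    (hnormal : ∀ x : AlgebraicClosure (FractionRing A),
      (∃ a ∈ Aperf, ∃ b ∈ Aperf, b ≠ 0 ∧ x * b = a) →
      (∃ f : Polynomial (AlgebraicClosure (FractionRing A)), f.Monic ∧
        (∀ n, f.coeff n ∈ Aperf) ∧ f.eval x = 0) → x ∈ Aperf) :
    ∀ a : FractionRing A, IsIntegral A a → a ∈ (algebraMap A (FractionRing A)).range := by
  intro a ha
  set L := AlgebraicClosure (FractionRing A)
  have hinj := (algebraMap (FractionRing A) L).injective
  have range_sub : ∀ y ∈ (algebraMap A L).range, y ∈ Aperf :=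
    fun y hy => (hAperf y).2 ⟨0, by simpa using hy⟩
  have hx : algebraMap _ L a ∈ Aperf := by
    obtain ⟨r, s, hs, hrs⟩ := IsFractionRing.exists_algebraMap_mul_eq (A := A) hinj a
    have hint : IsIntegral A (algebraMap _ L a) := ha.algebraMap
    obtain ⟨g, hg, hcoeff, hroot⟩ := hint.exists_monic_coeff_mem_range
    exact hnormal _ ⟨_, range_sub _ ⟨r, rfl⟩, _, range_sub _ ⟨s, rfl⟩, hs, hrs⟩
      ⟨g, hg, fun n => range_sub _ (hcoeff n), hroot⟩
  obtain ⟨n, hn⟩ := (hAperf _).1 hx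
  exact mem_of_pow_pow_mem pclosed n
    (mem_range_of_algebraMap_mem_range hinj (by rwa [map_pow]))

/-- A p-closed domain whose perfect closure (inside an algebraic closure of its
fraction field) is integrally closed in its fraction field is itself integrally
closed in its fraction field. -/
theorem stmt_0 (p : ℕ) (hp : p.Prime) (A : Type*) [CommRing A] [IsDomain A] [CharP A p]
    (pclosed : ∀ a : FractionRing A,
      a ^ p ∈ (algebraMap A (FractionRing A)).range → a ∈ (algebraMap A (FractionRing A)).range)
    (Aperf : Subring (AlgebraicClosure (FractionRing A)))
    (hAperf : ∀ x : AlgebraicClosure (FractionRing A), x ∈ Aperf ↔ ∃ n : ℕ,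
      x ^ p ^ n ∈ (algebraMap A (AlgebraicClosure (FractionRing A))).range)
    (hnormal : ∀ x : AlgebraicClosure (FractionRing A),
      (∃ a ∈ Aperf, ∃ b ∈ Aperf, b ≠ 0 ∧ x * b = a) →
      (∃ f : Polynomial (AlgebraicClosure (FractionRing A)), f.Monic ∧
        (∀ n, f.coeff n ∈ Aperf) ∧ f.eval x = 0) → x ∈ Aperf) :
    ∀ a : FractionRing A, IsIntegral A a → a ∈ (algebraMap A (FractionRing A)).range :=
  stmt_0_general p A pclosed Aperf hAperf hnormal
end

section
/- Let G be a group and K a subgroup such that every double coset KgK is a finite union of left cosets of K. Let H be the set of functions f : G → R (R a commutative ring) that are left and right K-invariant and supported on finitely many double cosets. Then the convolution (f₁ * f₂)(g) = Σ_{hK ∈ G/K} f₁(h) f₂(h⁻¹ g) is a well-defined (finite) sum independent of the choice of coset representatives, H is closed under convolution, convolution is associative and R-bilinear, and the characteristic function of K is a two-sided identity. Hence H is an associative unital R-algebra. -/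
/-- `f` is K-bi-invariant and supported on finitely many double cosets. -/
def IsHeckeFunction {G R : Type*} [Group G] [CommRing R] (K : Subgroup G) (f : G → R) : Prop :=
  (∀ g : G, ∀ k₁ ∈ K, ∀ k₂ ∈ K, f (k₁ * g * k₂) = f g) ∧
  ∃ S : Finset G, ∀ g : G, f g ≠ 0 → ∃ s ∈ S, ∃ k₁ ∈ K, ∃ k₂ ∈ K, g = k₁ * s * k₂

/-!
Right `K`-invariance of `f₁` and left `K`-invariance of `f₂` make `h ↦ f₁ h * f₂ (h⁻¹ * g)`
constant on left cosets `hK`, so the convolution is a sum over `G ⧸ K`. A Hecke function is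
supported on finitely many double cosets, each a finite union of left cosets, so it is nonzero on
only finitely many left cosets, and the same holds for each of its left translates. Every sum
occurring is therefore finite, and the algebra laws come down to reindexing by left translation on
`G ⧸ K`, exchanging two finite sums, and distributivity.
-/

open Function QuotientGroup

theorem finsum_comm_of_finite_support {α β M : Type*} [AddCommMonoid M] (f : α → β → M)
    (h : (support (uncurry f)).Finite) :
    ∑ᶠ a, ∑ᶠ b, f a b = ∑ᶠ b, ∑ᶠ a, f a b := by
  have h' : (support (uncurry fun b a => f a b)).Finite :=
    h.preimage Prod.swap_injective.injOn
  calc ∑ᶠ a, ∑ᶠ b, f a b = ∑ᶠ p : α × β, uncurry f p := (finsum_curry _ h).symm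
    _ = ∑ᶠ p : β × α, uncurry (fun b a => f a b) p :=
      (finsum_comp_equiv (Equiv.prodComm β α)).symm
    _ = ∑ᶠ b, ∑ᶠ a, f a b := finsum_curry _ h'

/-- `(G, K)` is a Hecke pair: every double coset `KgK` is a finite union of left cosets. -/
def IsHeckePair {G : Type*} [Group G] (K : Subgroup G) : Prop :=
  ∀ g : G, {x : G ⧸ K | ∃ k₁ ∈ K, ∃ k₂ ∈ K, x = QuotientGroup.mk (k₁ * g * k₂)}.Finite

section HeckeConvolution

variable {G R : Type*} [Group G] [CommRing R] {K : Subgroup G}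

namespace IsHeckeFunction

variable {f : G → R}

theorem apply_mul_of_mem (hf : IsHeckeFunction K f) (g : G) {k : G} (hk : k ∈ K) :
    f (g * k) = f g := by
  simpa using hf.1 g 1 K.one_mem k hk

theorem apply_mul_of_mem_left (hf : IsHeckeFunction K f) (g : G) {k : G} (hk : k ∈ K) :
    f (k * g) = f g := by
  simpa using hf.1 g k hk 1 K.one_mem

theorem apply_out_mk (hf : IsHeckeFunction K f) (g : G) :
    f (mk g : G ⧸ K).out = f g := by
  obtain ⟨k, hk⟩ := mk_out_eq_mul K g
  rw [hk, hf.apply_mul_of_mem g k.2]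

/-- If `f (w * x.out) ≠ 0` with `w * x.out ∈ K s K`, then `x ∈ w⁻¹ • (K s K / K)`. -/
theorem finite_support_apply_mul_out (hK : IsHeckePair K) (hf : IsHeckeFunction K f) (w : G) :
    (support fun x : G ⧸ K => f (w * x.out)).Finite := by
  obtain ⟨S, hS⟩ := hf.2
  refine (S.finite_toSet.biUnion fun s _ => (hK s).image (w⁻¹ • ·)).subset fun x hx => ?_
  obtain ⟨s, hs, k₁, hk₁, k₂, hk₂, he⟩ := hS _ hx
  refine Set.mem_biUnion hs ⟨mk (k₁ * s * k₂), ⟨k₁, hk₁, k₂, hk₂, rfl⟩, ?_⟩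
  show w⁻¹ • (mk (k₁ * s * k₂) : G ⧸ K) = x
  rw [← he, MulAction.Quotient.smul_mk, smul_eq_mul, inv_mul_cancel_left, out_eq']

end IsHeckeFunction

theorem isHeckeFunction_indicator_one :
    IsHeckeFunction K ((K : Set G).indicator (1 : G → R)) := by
  refine ⟨fun g k₁ hk₁ k₂ hk₂ => ?_, {1}, fun g hg => ?_⟩
  · classical
    simp only [Set.indicator_apply, SetLike.mem_coe, K.mul_mem_cancel_left hk₁,
      K.mul_mem_cancel_right hk₂, Pi.one_apply]
  · have hgK : g ∈ K := by
      by_contra hc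
      exact hg (Set.indicator_of_notMem hc _)
    exact ⟨1, Finset.mem_singleton_self 1, g, hgK, 1, K.one_mem, by group⟩

variable (K) in
/-- The coset representatives are `Quotient.out`; for Hecke functions the summand does not depend
on this choice (`heckeConv_summand_mk`). -/
noncomputable def heckeConv (f₁ f₂ : G → R) (g : G) : R :=
  ∑ᶠ x : G ⧸ K, f₁ x.out * f₂ (x.out⁻¹ * g)

variable {f f₁ f₂ f₃ : G → R}

theorem heckeConv_summand_mk (h₁ : IsHeckeFunction K f₁) (h₂ : IsHeckeFunction K f₂)
    (g h : G) :
    f₁ (mk h : G ⧸ K).out * f₂ ((mk h : G ⧸ K).out⁻¹ * g) = f₁ h * f₂ (h⁻¹ * g) := by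
  obtain ⟨k, hk⟩ := mk_out_eq_mul K h
  rw [hk, h₁.apply_mul_of_mem h k.2, mul_inv_rev, mul_assoc,
    h₂.apply_mul_of_mem_left _ (K.inv_mem k.2)]

theorem finite_support_heckeConv_summand (hK : IsHeckePair K) (h₁ : IsHeckeFunction K f₁)
    (f₂ : G → R) (g : G) :
    (support fun x : G ⧸ K => f₁ x.out * f₂ (x.out⁻¹ * g)).Finite :=
  (h₁.finite_support_apply_mul_out hK 1).subset fun _ hx => by
    simpa using left_ne_zero_of_mul hx

/-- Substituting `x ↦ w • x` in the sum over `G ⧸ K`. -/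
theorem heckeConv_mul_left_apply (h₁ : IsHeckeFunction K f₁) (h₂ : IsHeckeFunction K f₂)
    (w g : G) :
    heckeConv K f₁ f₂ (w * g) = ∑ᶠ x : G ⧸ K, f₁ (w * x.out) * f₂ (x.out⁻¹ * g) := by
  rw [heckeConv, ← finsum_comp_equiv (MulAction.toPerm w : Equiv.Perm (G ⧸ K))]
  refine finsum_congr fun x => ?_
  have hx : (MulAction.toPerm w : Equiv.Perm (G ⧸ K)) x = mk (w * x.out) := by
    conv_lhs => rw [← out_eq' x]
    rfl
  rw [hx, heckeConv_summand_mk h₁ h₂, mul_inv_rev, mul_assoc, inv_mul_cancel_left]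

theorem heckeConv_apply_mul_mul (h₁ : IsHeckeFunction K f₁) (h₂ : IsHeckeFunction K f₂)
    (g : G) {k₁ k₂ : G} (hk₁ : k₁ ∈ K) (hk₂ : k₂ ∈ K) :
    heckeConv K f₁ f₂ (k₁ * g * k₂) = heckeConv K f₁ f₂ g := by
  rw [mul_assoc, heckeConv_mul_left_apply h₁ h₂]
  refine finsum_congr fun x => ?_
  rw [h₁.apply_mul_of_mem_left _ hk₁, ← mul_assoc, h₂.apply_mul_of_mem _ hk₂]

/-- If `f₁ a * f₂ (a⁻¹ * g) ≠ 0` for `a = x.out`, and `b` represents the coset of `a⁻¹ * g`, then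
`g ∈ a * b * K`, where `aK` and `bK` range over the finitely many left cosets on which `f₁`,
resp. `f₂`, is nonzero. -/
theorem exists_finset_heckeConv_ne_zero (hK : IsHeckePair K) (h₁ : IsHeckeFunction K f₁)
    (h₂ : IsHeckeFunction K f₂) :
    ∃ S : Finset G, ∀ g : G, heckeConv K f₁ f₂ g ≠ 0 →
      ∃ s ∈ S, ∃ k₁ ∈ K, ∃ k₂ ∈ K, g = k₁ * s * k₂ := by
  classical
  have hA := h₁.finite_support_apply_mul_out hK 1
  have hB := h₂.finite_support_apply_mul_out hK 1
  refine ⟨(hA.toFinset ×ˢ hB.toFinset).image fun p => p.1.out * p.2.out, fun g hg => ?_⟩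
  obtain ⟨x, hx⟩ : ∃ x : G ⧸ K, f₁ x.out * f₂ (x.out⁻¹ * g) ≠ 0 := by
    by_contra! h
    exact hg (finsum_eq_zero_of_forall_eq_zero h)
  obtain ⟨k, hk⟩ := mk_out_eq_mul K (x.out⁻¹ * g)
  refine ⟨x.out * (mk (x.out⁻¹ * g) : G ⧸ K).out, Finset.mem_image.mpr
    ⟨(x, mk (x.out⁻¹ * g)), Finset.mem_product.mpr ⟨?_, ?_⟩, rfl⟩,
    1, K.one_mem, k⁻¹, K.inv_mem k.2, ?_⟩
  · simpa using left_ne_zero_of_mul hx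
  · simpa [h₂.apply_out_mk] using right_ne_zero_of_mul hx
  · rw [hk]
    group

theorem IsHeckeFunction.heckeConv (hK : IsHeckePair K) (h₁ : IsHeckeFunction K f₁)
    (h₂ : IsHeckeFunction K f₂) : IsHeckeFunction K (heckeConv K f₁ f₂) :=
  ⟨fun g _ hk₁ _ hk₂ => heckeConv_apply_mul_mul h₁ h₂ g hk₁ hk₂,
    exists_finset_heckeConv_ne_zero hK h₁ h₂⟩

theorem heckeConv_smul_left (hK : IsHeckePair K) (h₁ : IsHeckeFunction K f₁) (r : R)
    (f₂ : G → R) : heckeConv K (r • f₁) f₂ = r • heckeConv K f₁ f₂ := by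
  funext g
  rw [Pi.smul_apply, heckeConv, heckeConv, smul_finsum' r
    (finite_support_heckeConv_summand hK h₁ f₂ g)]
  simp only [Pi.smul_apply, smul_eq_mul, mul_assoc]

theorem heckeConv_smul_right (hK : IsHeckePair K) (h₁ : IsHeckeFunction K f₁) (r : R)
    (f₂ : G → R) : heckeConv K f₁ (r • f₂) = r • heckeConv K f₁ f₂ := by
  funext g
  rw [Pi.smul_apply, heckeConv, heckeConv, smul_finsum' r
    (finite_support_heckeConv_summand hK h₁ f₂ g)]
  simp only [Pi.smul_apply, smul_eq_mul, mul_left_comm]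

theorem heckeConv_add_left (hK : IsHeckePair K) (h₁ : IsHeckeFunction K f₁)
    (h₂ : IsHeckeFunction K f₂) (f₃ : G → R) :
    heckeConv K (f₁ + f₂) f₃ = heckeConv K f₁ f₃ + heckeConv K f₂ f₃ := by
  funext g
  rw [Pi.add_apply, heckeConv, heckeConv, heckeConv, ← finsum_add_distrib
    (finite_support_heckeConv_summand hK h₁ f₃ g) (finite_support_heckeConv_summand hK h₂ f₃ g)]
  simp only [Pi.add_apply, add_mul]

theorem heckeConv_add_right (hK : IsHeckePair K) (h₁ : IsHeckeFunction K f₁)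
    (f₂ f₃ : G → R) :
    heckeConv K f₁ (f₂ + f₃) = heckeConv K f₁ f₂ + heckeConv K f₁ f₃ := by
  funext g
  rw [Pi.add_apply, heckeConv, heckeConv, heckeConv, ← finsum_add_distrib
    (finite_support_heckeConv_summand hK h₁ f₂ g) (finite_support_heckeConv_summand hK h₁ f₃ g)]
  simp only [Pi.add_apply, mul_add]

/-- For fixed `y`, the summand of `(f₁ * f₂) * f₃` is nonzero only for `x` among the finitely many
cosets with `f₂ (y⁻¹ x) ≠ 0`, and `y` ranges over the finitely many cosets with `f₁ y ≠ 0`. -/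
theorem finite_support_heckeConv_assoc_summand (hK : IsHeckePair K) (h₁ : IsHeckeFunction K f₁)
    (h₂ : IsHeckeFunction K f₂) (f₃ : G → R) (g : G) :
    (support fun p : (G ⧸ K) × (G ⧸ K) =>
      f₁ p.2.out * f₂ (p.2.out⁻¹ * p.1.out) * f₃ (p.1.out⁻¹ * g)).Finite := by
  refine ((h₁.finite_support_apply_mul_out hK 1).biUnion fun y _ =>
    (h₂.finite_support_apply_mul_out hK y.out⁻¹).prod (Set.finite_singleton y)).subset ?_
  rintro ⟨x, y⟩ hp
  have hxy := left_ne_zero_of_mul hp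
  simp only [Set.mem_iUnion, Set.mem_prod, Set.mem_singleton_iff, mem_support, one_mul]
  exact ⟨y, left_ne_zero_of_mul hxy, right_ne_zero_of_mul hxy, rfl⟩

theorem heckeConv_assoc (hK : IsHeckePair K) (h₁ : IsHeckeFunction K f₁)
    (h₂ : IsHeckeFunction K f₂) (h₃ : IsHeckeFunction K f₃) :
    heckeConv K (heckeConv K f₁ f₂) f₃ = heckeConv K f₁ (heckeConv K f₂ f₃) := by
  funext g
  calc heckeConv K (heckeConv K f₁ f₂) f₃ g
      = ∑ᶠ (x : G ⧸ K) (y : G ⧸ K),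
          f₁ y.out * f₂ (y.out⁻¹ * x.out) * f₃ (x.out⁻¹ * g) :=
        finsum_congr fun x => finsum_mul' _ _
          (finite_support_heckeConv_summand hK h₁ f₂ x.out)
    _ = ∑ᶠ (y : G ⧸ K) (x : G ⧸ K),
          f₁ y.out * f₂ (y.out⁻¹ * x.out) * f₃ (x.out⁻¹ * g) :=
        finsum_comm_of_finite_support _
          (finite_support_heckeConv_assoc_summand hK h₁ h₂ f₃ g)
    _ = ∑ᶠ y : G ⧸ K, f₁ y.out * heckeConv K f₂ f₃ (y.out⁻¹ * g) := by
        refine finsum_congr fun y => ?_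
        rw [heckeConv_mul_left_apply h₂ h₃, mul_finsum' _ _
          ((h₂.finite_support_apply_mul_out hK _).subset (support_mul_subset_left _ _))]
        simp only [mul_assoc]

theorem heckeConv_indicator_one_left (hf : IsHeckeFunction K f) :
    heckeConv K ((K : Set G).indicator (1 : G → R)) f = f := by
  funext g
  rw [heckeConv, finsum_eq_single _ (mk 1 : G ⧸ K), heckeConv_summand_mk
    isHeckeFunction_indicator_one hf, Set.indicator_of_mem K.one_mem, Pi.one_apply, one_mul,
    inv_one, one_mul]
  refine fun x hx => QuotientGroup.induction_on x (fun a ha => ?_) hx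
  rw [heckeConv_summand_mk isHeckeFunction_indicator_one hf, Set.indicator_of_notMem, zero_mul]
  exact fun hmem => ha (QuotientGroup.eq.mpr (by simpa using hmem))

theorem heckeConv_indicator_one_right (hf : IsHeckeFunction K f) :
    heckeConv K f ((K : Set G).indicator (1 : G → R)) = f := by
  funext g
  rw [heckeConv, finsum_eq_single _ (mk g : G ⧸ K), heckeConv_summand_mk hf
    isHeckeFunction_indicator_one, inv_mul_cancel, Set.indicator_of_mem K.one_mem,
    Pi.one_apply, mul_one]
  refine fun x hx => QuotientGroup.induction_on x (fun a ha => ?_) hx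
  rw [heckeConv_summand_mk hf isHeckeFunction_indicator_one, Set.indicator_of_notMem, mul_zero]
  exact fun hmem => ha (QuotientGroup.eq.mpr hmem)

end HeckeConvolution

/-- The mod p (or any coefficient ring) Hecke algebra: convolution is a
well-defined finite sum, H is closed under it, it is associative, R-bilinear,
and the characteristic function of K is a two-sided identity. -/
theorem stmt_3 {G : Type*} [Group G] (K : Subgroup G) (R : Type*) [CommRing R]
    (hfin : ∀ g : G,
      {x : G ⧸ K | ∃ k₁ ∈ K, ∃ k₂ ∈ K, x = QuotientGroup.mk (k₁ * g * k₂)}.Finite) :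
    ∃ conv : (G → R) → (G → R) → (G → R),
      (∀ f₁ f₂ : G → R, IsHeckeFunction K f₁ → IsHeckeFunction K f₂ → ∀ g : G,
        ∀ F : G ⧸ K → R, (∀ h : G, F (QuotientGroup.mk h) = f₁ h * f₂ (h⁻¹ * g)) →
          (Function.support F).Finite ∧ conv f₁ f₂ g = ∑ᶠ x, F x) ∧
      (∀ f₁ f₂, IsHeckeFunction K f₁ → IsHeckeFunction K f₂ →
        IsHeckeFunction K (conv f₁ f₂)) ∧
      (∀ f₁ f₂ f₃, IsHeckeFunction K f₁ → IsHeckeFunction K f₂ → IsHeckeFunction K f₃ →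
        conv (conv f₁ f₂) f₃ = conv f₁ (conv f₂ f₃)) ∧
      (∀ (r : R) f₁ f₂, IsHeckeFunction K f₁ → IsHeckeFunction K f₂ →
        conv (r • f₁) f₂ = r • conv f₁ f₂ ∧ conv f₁ (r • f₂) = r • conv f₁ f₂) ∧
      (∀ f₁ f₂ f₃, IsHeckeFunction K f₁ → IsHeckeFunction K f₂ → IsHeckeFunction K f₃ →
        conv (f₁ + f₂) f₃ = conv f₁ f₃ + conv f₂ f₃ ∧
        conv f₁ (f₂ + f₃) = conv f₁ f₂ + conv f₁ f₃) ∧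
      (IsHeckeFunction K ((K : Set G).indicator (1 : G → R)) ∧
        ∀ f, IsHeckeFunction K f →
          conv ((K : Set G).indicator (1 : G → R)) f = f ∧
          conv f ((K : Set G).indicator (1 : G → R)) = f) := by
  refine ⟨heckeConv K, fun f₁ f₂ h₁ h₂ g F hF => ?_,
    fun _ _ h₁ h₂ => h₁.heckeConv hfin h₂,
    fun _ _ _ h₁ h₂ h₃ => heckeConv_assoc hfin h₁ h₂ h₃,
    fun r _ f₂ h₁ _ => ⟨heckeConv_smul_left hfin h₁ r f₂, heckeConv_smul_right hfin h₁ r f₂⟩,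
    fun _ f₂ f₃ h₁ h₂ _ => ⟨heckeConv_add_left hfin h₁ h₂ f₃, heckeConv_add_right hfin h₁ f₂ f₃⟩,
    isHeckeFunction_indicator_one,
    fun _ h => ⟨heckeConv_indicator_one_left h, heckeConv_indicator_one_right h⟩⟩
  obtain rfl : F = fun x : G ⧸ K => f₁ x.out * f₂ (x.out⁻¹ * g) := funext fun x =>
    QuotientGroup.induction_on x fun h => by rw [hF, heckeConv_summand_mk h₁ h₂]
  exact ⟨finite_support_heckeConv_summand hfin h₁ f₂ g, rfl⟩
end
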